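/- Let X¹ : Matrix (Fin I) (Fin (J*K)) ℝ, B : Matrix (Fin J) (Fin R) ℝ, C : Matrix (Fin K) (Fin R) ℝ, write M = C⊙B for the Khatri-Rao product, let λ > 0, and set G_λ := (Cᵀ ⬝ C) ∗ (Bᵀ ⬝ B) + λ • 1 (which is positive definite, hence invertible). Then Â := X¹ ⬝ M ⬝ G_λ⁻¹ minimizes the ridge-regularized objective over all A : Matrix (Fin I) (Fin R) ℝ: for every A, (1/2) ∑_{i,p} (X¹ i p − (Â ⬝ Mᵀ) i p)² + (λ/2) ∑_{i,r} (Â i r)² ≤ (1/2) ∑_{i,p} (X¹ i p − (A ⬝ Mᵀ) i p)² + (λ/2) ∑_{i,r} (A i r)². -/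
import Mathlib


open Matrix

/-- The element `x + a * y` of `Fin (a * b)`, encoding the pair `(x, y)`. -/
def emb {a b : ℕ} (x : Fin a) (y : Fin b) : Fin (a * b) :=
  ⟨x.val + a * y.val, by
    have hx := x.isLt
    have hy := y.isLt
    calc x.val + a * y.val < a + a * y.val := by omega
      _ = a * (y.val + 1) := by ring
      _ ≤ a * b := Nat.mul_le_mul_left a hy⟩

lemma emb_bijective {a b : ℕ} :
    Function.Bijective (fun p : Fin a × Fin b => emb p.1 p.2) := by
  rw [Fintype.bijective_iff_injective_and_card]
  refine ⟨?_, by simp⟩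
  rintro ⟨x, y⟩ ⟨x', y'⟩ h
  have ha : 0 < a := x.pos
  have h' : x.val + a * y.val = x'.val + a * y'.val := by
    simpa [emb, Fin.ext_iff] using h
  have e1 : (x.val + a * y.val) / a = y.val := by
    rw [Nat.add_mul_div_left _ _ ha, Nat.div_eq_of_lt x.isLt, Nat.zero_add]
  have e2 : (x'.val + a * y'.val) / a = y'.val := by
    rw [Nat.add_mul_div_left _ _ ha, Nat.div_eq_of_lt x'.isLt, Nat.zero_add]
  have hy : y.val = y'.val := by rw [← e1, ← e2, h']
  have hx : x.val = x'.val := by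
    rw [hy] at h'
    exact Nat.add_right_cancel h'
  simp [Prod.ext_iff, Fin.ext_iff, hx, hy]

/-- Ridge-regularized ALS optimality: if `M = C ⊙ B` is the Khatri-Rao product and
`Gλ = (Cᵀ * C) ∗ (Bᵀ * B) + λ • 1` with `λ > 0`, then `Â = X1 * M * Gλ⁻¹` minimizes
the ridge objective `A ↦ (1/2)‖X1 - A * Mᵀ‖² + (λ/2)‖A‖²` over all `A`. -/
theorem als_ridge_optimal {I J K R : ℕ}
    (X1 : Matrix (Fin I) (Fin (J * K)) ℝ)
    (B : Matrix (Fin J) (Fin R) ℝ) (C : Matrix (Fin K) (Fin R) ℝ)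
    (M : Matrix (Fin (J * K)) (Fin R) ℝ)
    (hM : ∀ (j : Fin J) (k : Fin K) (r : Fin R), M (emb j k) r = C k r * B j r)
    (lam : ℝ) (hlam : 0 < lam)
    (Glam : Matrix (Fin R) (Fin R) ℝ)
    (hGlam : Glam = Matrix.hadamard (Cᵀ * C) (Bᵀ * B) + lam • (1 : Matrix (Fin R) (Fin R) ℝ))
    (Ahat : Matrix (Fin I) (Fin R) ℝ)
    (hAhat : Ahat = X1 * M * Glam⁻¹)
    (A : Matrix (Fin I) (Fin R) ℝ) :
    (1 / 2) * ∑ i : Fin I, ∑ p : Fin (J * K), (X1 i p - (Ahat * Mᵀ) i p) ^ 2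
        + (lam / 2) * ∑ i : Fin I, ∑ r : Fin R, (Ahat i r) ^ 2 ≤
      (1 / 2) * ∑ i : Fin I, ∑ p : Fin (J * K), (X1 i p - (A * Mᵀ) i p) ^ 2
        + (lam / 2) * ∑ i : Fin I, ∑ r : Fin R, (A i r) ^ 2 := by
  -- Step 1: `Mᵀ * M` equals the Hadamard product.
  have hMtM : Mᵀ * M = Matrix.hadamard (Cᵀ * C) (Bᵀ * B) := by
    ext r s
    have hsum := Fintype.sum_bijective _ (emb_bijective (a := J) (b := K))
      (fun p : Fin J × Fin K => M (emb p.1 p.2) r * M (emb p.1 p.2) s)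
      (fun q => M q r * M q s) (fun p => rfl)
    simp only [Matrix.mul_apply, Matrix.hadamard_apply, Matrix.transpose_apply]
    rw [← hsum, Fintype.sum_prod_type]
    simp only [hM]
    rw [Finset.sum_mul_sum, Finset.sum_comm]
    exact Finset.sum_congr rfl fun j _ => Finset.sum_congr rfl fun k _ => by ring
  have hG : Glam = Mᵀ * M + lam • 1 := by rw [hGlam, hMtM]
  -- Step 2: `Glam` is positive definite, hence invertible.
  have hMtM_psd : (Mᵀ * M).PosSemidef := by
    have := Matrix.posSemidef_conjTranspose_mul_self M
    simpa [Matrix.conjTranspose_eq_transpose_of_trivial] using this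
  have hId : (lam • (1 : Matrix (Fin R) (Fin R) ℝ)).PosDef := by
    rw [Matrix.smul_one_eq_diagonal]
    exact Matrix.PosDef.diagonal (fun _ => hlam)
  have hGpos : Glam.PosDef := by
    rw [hG]; exact Matrix.PosDef.posSemidef_add hMtM_psd hId
  have hAG : Ahat * Glam = X1 * M := by
    rw [hAhat, Matrix.mul_assoc, Matrix.nonsing_inv_mul Glam hGpos.det_pos.ne'.isUnit,
      Matrix.mul_one]
  -- Step 3: the normal equations hold entrywise.
  have hkey : ∀ (i : Fin I) (r : Fin R),
      (X1 * M) i r - (Ahat * (Mᵀ * M)) i r - lam * Ahat i r = 0 := by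
    intro i r
    have h1 : Ahat * (Mᵀ * M) + lam • Ahat = X1 * M := by
      calc Ahat * (Mᵀ * M) + lam • Ahat = Ahat * (Mᵀ * M + lam • 1) := by
            rw [Matrix.mul_add, Matrix.mul_smul, Matrix.mul_one]
        _ = X1 * M := by rw [← hG, hAG]
    have h2 := congrFun (congrFun h1 i) r
    simp only [Matrix.add_apply, Matrix.smul_apply, smul_eq_mul] at h2
    linarith
  -- Step 4: reduce to a per-row inequality.
  have hgoal : ∀ (D : Matrix (Fin I) (Fin R) ℝ),
      (1 / 2) * ∑ i : Fin I, ∑ p : Fin (J * K), (X1 i p - (D * Mᵀ) i p) ^ 2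
        + (lam / 2) * ∑ i : Fin I, ∑ r : Fin R, (D i r) ^ 2
      = ∑ i : Fin I, ((1 / 2) * ∑ p : Fin (J * K), (X1 i p - (D * Mᵀ) i p) ^ 2
        + (lam / 2) * ∑ r : Fin R, (D i r) ^ 2) := by
    intro D
    rw [Finset.mul_sum, Finset.mul_sum, ← Finset.sum_add_distrib]
  rw [hgoal, hgoal]
  apply Finset.sum_le_sum
  intro i _
  have hsplit : ∀ p, (A * Mᵀ) i p = (Ahat * Mᵀ) i p + ((A - Ahat) * Mᵀ) i p := by
    intro p
    rw [Matrix.sub_mul, Matrix.sub_apply]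
    ring
  -- cross term conversion
  have hcross : ∑ p : Fin (J * K), (X1 i p - (Ahat * Mᵀ) i p) * (((A - Ahat) * Mᵀ) i p)
      = ∑ r : Fin R, (A i r - Ahat i r) * ((X1 * M) i r - (Ahat * (Mᵀ * M)) i r) := by
    calc ∑ p : Fin (J * K), (X1 i p - (Ahat * Mᵀ) i p) * (((A - Ahat) * Mᵀ) i p)
        = ∑ p : Fin (J * K), ∑ r : Fin R,
            (A i r - Ahat i r) * ((X1 i p - (Ahat * Mᵀ) i p) * M p r) := by
          refine Finset.sum_congr rfl fun p _ => ?_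
          have hEp : ((A - Ahat) * Mᵀ) i p = ∑ r : Fin R, (A i r - Ahat i r) * M p r := by
            rw [Matrix.mul_apply]
            exact Finset.sum_congr rfl fun r _ => by
              simp only [Matrix.transpose_apply, Matrix.sub_apply]
          rw [hEp, Finset.mul_sum]
          refine Finset.sum_congr rfl fun r _ => ?_
          ring
      _ = ∑ r : Fin R, ∑ p : Fin (J * K),
            (A i r - Ahat i r) * ((X1 i p - (Ahat * Mᵀ) i p) * M p r) := Finset.sum_comm
      _ = ∑ r : Fin R, (A i r - Ahat i r) * ((X1 * M) i r - (Ahat * (Mᵀ * M)) i r) := by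
          refine Finset.sum_congr rfl fun r _ => ?_
          rw [← Finset.mul_sum]
          congr 1
          have hA1 : (Ahat * (Mᵀ * M)) i r = ∑ p, (Ahat * Mᵀ) i p * M p r := by
            rw [← Matrix.mul_assoc, Matrix.mul_apply]
          rw [Matrix.mul_apply, hA1, ← Finset.sum_sub_distrib]
          exact Finset.sum_congr rfl fun p _ => by ring
  have hq : ∑ p : Fin (J * K), (X1 i p - (A * Mᵀ) i p) ^ 2
      = ∑ p : Fin (J * K), (X1 i p - (Ahat * Mᵀ) i p) ^ 2
        + ∑ p : Fin (J * K), (((A - Ahat) * Mᵀ) i p) ^ 2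
        - 2 * ∑ r : Fin R, (A i r - Ahat i r) * ((X1 * M) i r - (Ahat * (Mᵀ * M)) i r) := by
    rw [← hcross, Finset.mul_sum, ← Finset.sum_add_distrib, ← Finset.sum_sub_distrib]
    refine Finset.sum_congr rfl fun p _ => ?_
    rw [hsplit p]; ring
  have hs : ∑ r : Fin R, (A i r) ^ 2
      = ∑ r : Fin R, (Ahat i r) ^ 2 + ∑ r : Fin R, (A i r - Ahat i r) ^ 2
        + 2 * ∑ r : Fin R, Ahat i r * (A i r - Ahat i r) := by
    rw [Finset.mul_sum, ← Finset.sum_add_distrib, ← Finset.sum_add_distrib]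
    exact Finset.sum_congr rfl fun r _ => by ring
  have hzero : ∑ r : Fin R, (A i r - Ahat i r) * ((X1 * M) i r - (Ahat * (Mᵀ * M)) i r)
      = lam * ∑ r : Fin R, Ahat i r * (A i r - Ahat i r) := by
    rw [Finset.mul_sum]
    refine Finset.sum_congr rfl fun r _ => ?_
    have h2 : (X1 * M) i r - (Ahat * (Mᵀ * M)) i r = lam * Ahat i r := by
      have := hkey i r; linarith
    rw [h2]; ring
  have h1 : 0 ≤ ∑ p : Fin (J * K), (((A - Ahat) * Mᵀ) i p) ^ 2 :=
    Finset.sum_nonneg fun p _ => sq_nonneg _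
  have h2 : 0 ≤ ∑ r : Fin R, (A i r - Ahat i r) ^ 2 :=
    Finset.sum_nonneg fun r _ => sq_nonneg _
  rw [hq, hs, hzero]
  nlinarith [mul_nonneg hlam.le h2]
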